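/- arXiv:2409.10468 — 2 statements merged into one kernel-verified Lean document; each statement's English description precedes it below -/
import Mathlib

section
/- Let n ≥ 2 be an integer, let c_1, …, c_{n−1} be nonzero complex numbers, and let R be a monic complex polynomial of degree 2n whose derivative factors as R′(X) = 2n·(X − 1)·∏_{i=1}^{n−1} (X − c_i)(X − c_i^{−1}). Writing a_k for the coefficient of X^k in R, for every integer j with 1 ≤ j ≤ n−1 one has (2n − j)·a_{2n−j} = −(j + 1)·a_{j+1}. -/
open Polynomial

lemma reflect1_lin (a : ℂ) (ha : a ≠ 0) :
    reflect 1 (X - C a) = C (-a) * (X - C a⁻¹) := by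
  ext i
  rw [coeff_reflect]
  match i with
  | 0 => simp [revAt_le, mul_inv_cancel₀ ha]
  | 1 => simp [revAt_le]
  | (k+2) =>
      rw [revAt_eq_self_of_lt (by omega)]
      rw [coeff_C_mul]
      simp [coeff_X, coeff_C]

lemma reflect2_pair (a : ℂ) (ha : a ≠ 0) :
    reflect 2 ((X - C a) * (X - C a⁻¹)) = (X - C a) * (X - C a⁻¹) := by
  have h := reflect_mul (X - C a) (X - C a⁻¹) (F := 1) (G := 1)
    (natDegree_X_sub_C a ▸ le_refl _) (natDegree_X_sub_C a⁻¹ ▸ le_refl _)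
  rw [h, reflect1_lin a ha, reflect1_lin a⁻¹ (inv_ne_zero ha), inv_inv]
  rw [mul_mul_mul_comm, ← C_mul]
  rw [show -a * -a⁻¹ = 1 by field_simp]
  rw [C_1, one_mul, mul_comm]

lemma reflect_prod {ι : Type*} (s : Finset ι) (f : ι → ℂ[X])
    (hf : ∀ i ∈ s, (f i).natDegree ≤ 2) :
    reflect (2 * s.card) (∏ i ∈ s, f i) = ∏ i ∈ s, reflect 2 (f i) := by
  classical
  induction s using Finset.induction with
  | empty => simp
  | @insert a s' h ih =>
      rw [Finset.prod_insert h, Finset.prod_insert h,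
        Finset.card_insert_of_notMem h,
        show 2 * (s'.card + 1) = 2 + 2 * s'.card by ring,
        reflect_mul _ _ (hf a (Finset.mem_insert_self a s'))
          ((natDegree_prod_le s' f).trans (by
            calc ∑ i ∈ s', (f i).natDegree ≤ ∑ i ∈ s', 2 :=
              Finset.sum_le_sum fun i hi => hf i (Finset.mem_insert_of_mem hi)
            _ = 2 * s'.card := by rw [Finset.sum_const, smul_eq_mul, mul_comm])),
        ih (fun i hi => hf i (Finset.mem_insert_of_mem hi))]

/-- Let `n ≥ 2`, let `c 1, …, c (n-1)` be nonzero complex numbers, and let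
`R` be a monic complex polynomial of degree `2n` whose derivative factors as
`R' = 2n (X - 1) ∏ (X - cᵢ)(X - cᵢ⁻¹)`. Writing `a k` for the coefficient of `X^k` in `R`,
for every `1 ≤ j ≤ n - 1` one has `(2n - j) a_{2n-j} = -(j + 1) a_{j+1}`. -/
theorem stmt2 (n : ℕ) (hn : 2 ≤ n) (c : Fin (n - 1) → ℂ) (hc : ∀ i, c i ≠ 0)
    (R : ℂ[X]) (hmonic : R.Monic) (hdeg : R.natDegree = 2 * n)
    (hfac : derivative R =
      C (2 * n : ℂ) * (X - 1) * ∏ i, (X - C (c i)) * (X - C (c i)⁻¹)) :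
    ∀ j : ℕ, 1 ≤ j → j ≤ n - 1 →
      ((2 * n : ℂ) - (j : ℂ)) * R.coeff (2 * n - j) = -((j : ℂ) + 1) * R.coeff (j + 1) := by
  set P := derivative R with hP
  have hprod : reflect (2 * (n - 1)) (∏ i, (X - C (c i)) * (X - C (c i)⁻¹))
      = ∏ i, (X - C (c i)) * (X - C (c i)⁻¹) := by
    rw [show (2 * (n-1)) = 2 * (Finset.univ : Finset (Fin (n-1))).card by
        simp [Finset.card_univ]]
    rw [reflect_prod _ _ (fun i _ => by
      apply (natDegree_mul_le).trans
      simp [natDegree_X_sub_C])]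
    exact Finset.prod_congr rfl fun i _ => reflect2_pair (c i) (hc i)
  have hrefl : reflect (2 * n - 1) P = -P := by
    rw [hfac, mul_assoc, show (2 * n - 1) = 1 + 2 * (n - 1) by omega,
      reflect_C_mul,
      reflect_mul (X - 1) _ (by simpa using (natDegree_X_sub_C (1:ℂ)).le)
        ((natDegree_prod_le _ _).trans (by
          have h2 : ∑ i : Fin (n-1), ((X - C (c i)) * (X - C (c i)⁻¹)).natDegree
              ≤ ∑ _i : Fin (n-1), 2 :=
            Finset.sum_le_sum fun i _ => by
              apply (natDegree_mul_le).trans; simp [natDegree_X_sub_C]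
          simpa [Finset.sum_const, Finset.card_univ, mul_comm] using h2)),
      hprod]
    have : reflect 1 (X - 1 : ℂ[X]) = -(X - 1) := by
      have := reflect1_lin (1 : ℂ) one_ne_zero
      simpa using this
    rw [this]
    ring
  intro j hj1 hj2
  have hjn : j < n := by omega
  have hcoeff := congrArg (fun q => q.coeff (2 * n - 1 - j)) hrefl
  simp only [coeff_reflect, coeff_neg] at hcoeff
  rw [revAt_le (by omega : 2 * n - 1 - j ≤ 2 * n - 1),
    show 2 * n - 1 - (2 * n - 1 - j) = j by omega] at hcoeff
  -- hcoeff : P.coeff j = -(P.coeff (2n-1-j))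
  rw [hP, coeff_derivative, coeff_derivative,
    show 2 * n - 1 - j + 1 = 2 * n - j by omega] at hcoeff
  have hcast : ((2 * n - 1 - j : ℕ) : ℂ) + 1 = (2 * n : ℂ) - (j : ℂ) := by
    have : (2 * n - 1 - j : ℕ) = 2 * n - 1 - j := rfl
    push_cast [Nat.cast_sub (by omega : j ≤ 2*n - 1), Nat.cast_sub (by omega : 1 ≤ 2*n)]
    ring
  rw [hcast] at hcoeff
  rw [mul_comm]
  rw [← neg_neg (R.coeff (2 * n - j) * (2 * ↑n - ↑j)), ← hcoeff]
  ring
end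

section
/- Let n ≥ 2 be an integer, let c_1, …, c_{n−1} be nonzero complex numbers, and let R be a monic complex polynomial of degree 2n with R(0) = 0 whose derivative factors as R′(X) = 2n·(X − 1)·∏_{i=1}^{n−1} (X − c_i)(X − c_i^{−1}). Then, writing a_k for the coefficient of X^k in R, one has, for all z ∈ ℂ, R(z) = z^{2n} − Σ_{j=1}^{n−1} ((j+1)/(2n−j))·a_{j+1}·z^{2n−j} + Σ_{j=n}^{2n−2} a_{2n−j}·z^{2n−j} − 2n·z. In particular, R is completely determined by its coefficients a_2, …, a_n. -/
open Polynomial Finset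

lemma reflect_one_X_sub_C (b : ℂ) (hb : b ≠ 0) :
    reflect 1 ((X : ℂ[X]) - C b) = -C b * (X - C b⁻¹) := by
  have h1 : reflect 1 ((X : ℂ[X]) - C b) = 1 - C b * X := by
    rw [sub_eq_add_neg, reflect_add, reflect_neg, ← pow_one (X : ℂ[X]),
      reflect_monomial, reflect_C, pow_one]
    have : revAt 1 1 = 0 := by rw [revAt_le (le_refl 1)]
    rw [this, pow_zero, sub_eq_add_neg]
  rw [h1, neg_mul, mul_sub, ← C_mul, mul_inv_cancel₀ hb, C_1]
  ring

lemma reflect_two_pair (b : ℂ) (hb : b ≠ 0) :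
    reflect 2 (((X : ℂ[X]) - C b) * (X - C b⁻¹)) = (X - C b) * (X - C b⁻¹) := by
  have h2 : (2 : ℕ) = 1 + 1 := rfl
  rw [h2, reflect_mul _ _ (natDegree_X_sub_C _).le (natDegree_X_sub_C _).le,
    reflect_one_X_sub_C b hb, reflect_one_X_sub_C b⁻¹ (inv_ne_zero hb), inv_inv]
  have : -C b * ((X : ℂ[X]) - C b⁻¹) * (-C b⁻¹ * (X - C b))
      = C b * C b⁻¹ * ((X - C b) * (X - C b⁻¹)) := by ring
  rw [this, ← C_mul, mul_inv_cancel₀ hb, C_1, one_mul]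

/-- Let `n ≥ 2`, let `c 1, …, c (n-1)` be nonzero complex numbers, and let
`R` be a monic complex polynomial of degree `2n` with `R(0) = 0` whose derivative factors as
`R' = 2n (X - 1) ∏ (X - cᵢ)(X - cᵢ⁻¹)`. Then, writing `a k` for the coefficient of `X^k`
in `R`, for all `z ∈ ℂ`,
`R(z) = z^{2n} − Σ_{j=1}^{n−1} ((j+1)/(2n−j)) a_{j+1} z^{2n−j}
      + Σ_{j=n}^{2n−2} a_{2n−j} z^{2n−j} − 2n z`. -/
theorem stmt3 (n : ℕ) (hn : 2 ≤ n) (c : Fin (n - 1) → ℂ) (hc : ∀ i, c i ≠ 0)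
    (R : ℂ[X]) (hmonic : R.Monic) (hdeg : R.natDegree = 2 * n) (hzero : R.eval 0 = 0)
    (hfac : derivative R =
      C (2 * n : ℂ) * (X - 1) * ∏ i, (X - C (c i)) * (X - C (c i)⁻¹)) :
    ∀ z : ℂ,
      R.eval z =
        z ^ (2 * n)
          - ∑ j ∈ Icc 1 (n - 1),
              (((j : ℂ) + 1) / ((2 * n : ℂ) - (j : ℂ))) * R.coeff (j + 1) * z ^ (2 * n - j)
          + ∑ j ∈ Icc n (2 * n - 2), R.coeff (2 * n - j) * z ^ (2 * n - j)
          - (2 * n : ℂ) * z := by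
  intro z
  have ha0 : R.coeff 0 = 0 := by
    rwa [Polynomial.coeff_zero_eq_eval_zero]
  have hatop : R.coeff (2 * n) = 1 := by
    have := hmonic.leadingCoeff
    rwa [Polynomial.leadingCoeff, hdeg] at this
  have ha1 : R.coeff 1 = -(2 * n : ℂ) := by
    have h0 := congrArg (Polynomial.eval 0) hfac
    simp only [eval_mul, eval_prod, eval_sub, eval_X, eval_C, eval_one] at h0
    have hprod : (∏ i : Fin (n-1), (0 - c i) * (0 - (c i)⁻¹)) = 1 := by
      rw [Finset.prod_eq_one]
      intro i _
      rw [zero_sub, zero_sub, neg_mul_neg, mul_inv_cancel₀ (hc i)]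
    rw [hprod] at h0
    have hc0 : (derivative R).eval 0 = R.coeff 1 := by
      rw [← Polynomial.coeff_zero_eq_eval_zero, Polynomial.coeff_derivative]
      push_cast; ring
    rw [hc0] at h0
    rw [h0]; ring
  -- degree bound on the product
  have hdegpair : ∀ i : Fin (n - 1),
      (((X : ℂ[X]) - C (c i)) * (X - C (c i)⁻¹)).natDegree ≤ 2 := by
    intro i
    calc (((X : ℂ[X]) - C (c i)) * (X - C (c i)⁻¹)).natDegree
        ≤ (X - C (c i)).natDegree + ((X : ℂ[X]) - C (c i)⁻¹).natDegree := natDegree_mul_le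
      _ ≤ 2 := by rw [natDegree_X_sub_C, natDegree_X_sub_C]
  have hP : ∀ s : Finset (Fin (n - 1)),
      reflect (2 * s.card) (∏ i ∈ s, ((X : ℂ[X]) - C (c i)) * (X - C (c i)⁻¹))
        = ∏ i ∈ s, ((X : ℂ[X]) - C (c i)) * (X - C (c i)⁻¹) := by
    intro s
    induction s using Finset.induction with
    | empty => simp
    | @insert a s hx ih =>
      rw [Finset.prod_insert hx, Finset.card_insert_of_notMem hx]
      have hds : (∏ i ∈ s, ((X : ℂ[X]) - C (c i)) * (X - C (c i)⁻¹)).natDegree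
          ≤ 2 * s.card := by
        refine le_trans (natDegree_prod_le _ _) ?_
        have hsum : ∑ i ∈ s, (((X : ℂ[X]) - C (c i)) * (X - C (c i)⁻¹)).natDegree
            ≤ ∑ _i ∈ s, 2 := Finset.sum_le_sum fun i _ => hdegpair i
        refine le_trans hsum ?_
        rw [Finset.sum_const, smul_eq_mul, mul_comm]
      have hcard : 2 * (s.card + 1) = 2 + 2 * s.card := by ring
      rw [hcard, reflect_mul _ _ (hdegpair a) hds, ih, reflect_two_pair _ (hc a)]
  -- reflection identity for derivative R
  have hrefl : reflect (2 * n - 1) (derivative R) = -(derivative R) := by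
    have hds : (∏ i : Fin (n - 1), ((X : ℂ[X]) - C (c i)) * (X - C (c i)⁻¹)).natDegree
        ≤ 2 * (n - 1) := by
      refine le_trans (natDegree_prod_le _ _) ?_
      have hsum : ∑ i : Fin (n - 1), (((X : ℂ[X]) - C (c i)) * (X - C (c i)⁻¹)).natDegree
          ≤ ∑ _i : Fin (n - 1), 2 := Finset.sum_le_sum fun i _ => hdegpair i
      refine le_trans hsum ?_
      rw [Finset.sum_const, smul_eq_mul, mul_comm, Finset.card_univ, Fintype.card_fin]
    have hsplit : 2 * n - 1 = 1 + 2 * (n - 1) := by omega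
    have hX1 : ((X : ℂ[X]) - 1) = X - C 1 := by rw [C_1]
    rw [hfac, mul_assoc, reflect_C_mul, hsplit,
      reflect_mul _ _ (by rw [hX1, natDegree_X_sub_C] : ((X : ℂ[X]) - 1).natDegree ≤ 1) hds]
    have hPu := hP Finset.univ
    rw [Finset.card_univ, Fintype.card_fin] at hPu
    rw [hPu, hX1, reflect_one_X_sub_C 1 one_ne_zero, inv_one, C_1]
    ring
  -- coefficient symmetry
  have hkey : ∀ j ∈ Icc 1 (n - 1),
      R.coeff (2 * n - j) = -(((j : ℂ) + 1) / ((2 * n : ℂ) - (j : ℂ))) * R.coeff (j + 1) := by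
    intro j hj
    rw [Finset.mem_Icc] at hj
    have hj1 : j ≤ 2 * n - 1 := by omega
    have h := congrArg (fun p => Polynomial.coeff p (2 * n - 1 - j)) hrefl
    simp only [coeff_reflect, coeff_neg] at h
    rw [revAt_le (by omega : 2 * n - 1 - j ≤ 2 * n - 1)] at h
    have e1 : 2 * n - 1 - (2 * n - 1 - j) = j := by omega
    rw [e1] at h
    -- h : R'.coeff j = -(R'.coeff (2n-1-j))
    rw [Polynomial.coeff_derivative, Polynomial.coeff_derivative] at h
    have e2 : 2 * n - 1 - j + 1 = 2 * n - j := by omega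
    rw [e2] at h
    -- h : R.coeff (j+1) * (j+1) = -(R.coeff (2n-j) * (2n-1-j+1))
    have hcast : ((2 * n - 1 - j : ℕ) : ℂ) + 1 = (2 * n : ℂ) - (j : ℂ) := by
      have h' : 2 * n - 1 - j + 1 = 2 * n - j := by omega
      rw [← Nat.cast_one (R := ℂ), ← Nat.cast_add, h', Nat.cast_sub (by omega : j ≤ 2 * n)]
      push_cast <;> ring_nf
    rw [hcast] at h
    have hne : (2 * n : ℂ) - (j : ℂ) ≠ 0 := by
      have h2 : ((2 * n : ℕ) : ℂ) - ((j : ℕ) : ℂ) ≠ 0 := by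
        rw [sub_ne_zero, Ne, Nat.cast_inj]
        omega
      intro hh
      apply h2
      push_cast
      linear_combination hh
    field_simp
    linear_combination h
  -- now assemble
  have heval : R.eval z = ∑ k ∈ Finset.range (2 * n + 1), R.coeff k * z ^ k :=
    Polynomial.eval_eq_sum_range' (by rw [hdeg]; omega : R.natDegree < 2 * n + 1) z
  have hsetsplit : Finset.range (2 * n + 1)
      = insert 0 (insert 1 (insert (2 * n) (Icc 2 (2 * n - 1)))) := by
    ext k
    simp only [Finset.mem_range, Finset.mem_insert, Finset.mem_Icc]
    omega
  rw [heval, hsetsplit]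
  rw [Finset.sum_insert (by simp only [Finset.mem_insert, Finset.mem_Icc]; omega),
    Finset.sum_insert (by simp only [Finset.mem_insert, Finset.mem_Icc]; omega),
    Finset.sum_insert (by simp only [Finset.mem_Icc]; omega)]
  rw [ha0, ha1, hatop]
  -- reindex middle sum: k = 2n - j over j ∈ Icc 1 (2n-2)
  have hmid : ∑ k ∈ Icc 2 (2 * n - 1), R.coeff k * z ^ k
      = ∑ j ∈ Icc 1 (2 * n - 2), R.coeff (2 * n - j) * z ^ (2 * n - j) := by
    refine Finset.sum_nbij' (fun k => 2 * n - k) (fun j => 2 * n - j) ?_ ?_ ?_ ?_ ?_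
    · intro k hk; simp only [Finset.mem_Icc] at hk ⊢; omega
    · intro j hj; simp only [Finset.mem_Icc] at hj ⊢; omega
    · intro k hk; simp only [Finset.mem_Icc] at hk; omega
    · intro j hj; simp only [Finset.mem_Icc] at hj; omega
    · intro k hk; simp only [Finset.mem_Icc] at hk
      have he : 2 * n - (2 * n - k) = k := by omega
      rw [he]
  rw [hmid]
  have hunion : Icc 1 (2 * n - 2) = Icc 1 (n - 1) ∪ Icc n (2 * n - 2) := by
    ext k; simp only [Finset.mem_union, Finset.mem_Icc]; omega
  have hdisj : Disjoint (Icc 1 (n - 1)) (Icc n (2 * n - 2)) := by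
    rw [Finset.disjoint_left]
    intro k hk hk'
    rw [Finset.mem_Icc] at *
    omega
  rw [hunion, Finset.sum_union hdisj]
  have hfirst : ∑ j ∈ Icc 1 (n - 1), R.coeff (2 * n - j) * z ^ (2 * n - j)
      = -∑ j ∈ Icc 1 (n - 1),
          (((j : ℂ) + 1) / ((2 * n : ℂ) - (j : ℂ))) * R.coeff (j + 1) * z ^ (2 * n - j) := by
    rw [← Finset.sum_neg_distrib]
    refine Finset.sum_congr rfl fun j hj => ?_
    rw [hkey j hj]
    ring
  rw [hfirst]
  push_cast
  ring
end
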